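/- arXiv:2406.01769 — 8 statements merged into one kernel-verified Lean document; each statement's English description precedes it below -/
import Mathlib

section
/- For any integrable function f on [0, π/T] with 0 ≤ f(ω) ≤ α_M and ∫₀^{π/T} f(ω) dω = α_M·Γ where 0 ≤ Γ ≤ π/(2T), one has ∫₀^{π/T} f(ω)·cos(ωT) dω ≤ ∫₀^Γ α_M·cos(ωT) dω. -/
/-!
Bathtub principle: among densities `0 ≤ f ≤ M` of prescribed mass, the integral against a weight
that decreases through the level `c` is maximised by filling the region where the weight exceeds
`c`. For the weight `cos (ω T)`, decreasing on `[0, π / T]`, that region is `[0, Γ]`.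
-/

open Real MeasureTheory intervalIntegral

section Bathtub

variable {a γ b M : ℝ} {f h : ℝ → ℝ}

theorem integral_mul_le_of_nonneg_of_nonpos (haγ : a ≤ γ) (hγb : γ ≤ b)
    (hf : IntervalIntegrable f volume a b) (hh : ContinuousOn h (Set.Icc a b))
    (hf_bound : ∀ x ∈ Set.Icc a b, 0 ≤ f x ∧ f x ≤ M)
    (hh_nonneg : ∀ x ∈ Set.Icc a γ, 0 ≤ h x) (hh_nonpos : ∀ x ∈ Set.Icc γ b, h x ≤ 0) :
    ∫ x in a..b, f x * h x ≤ ∫ x in a..γ, M * h x := by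
  have hab : a ≤ b := haγ.trans hγb
  have hfh : IntervalIntegrable (fun x => f x * h x) volume a b :=
    hf.mul_continuousOn (by rwa [Set.uIcc_of_le hab])
  have hfh_left : IntervalIntegrable (fun x => f x * h x) volume a γ :=
    hfh.mono_set (Set.uIcc_subset_uIcc_left (by simp [Set.uIcc_of_le, haγ, hγb, hab]))
  have hfh_right : IntervalIntegrable (fun x => f x * h x) volume γ b :=
    hfh.mono_set (Set.uIcc_subset_uIcc_right (by simp [Set.uIcc_of_le, haγ, hγb, hab]))
  have hMh : IntervalIntegrable (fun x => M * h x) volume a γ :=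
    ((hh.mono (Set.Icc_subset_Icc_right hγb)).intervalIntegrable_of_Icc haγ).const_mul M
  have h_left : ∫ x in a..γ, f x * h x ≤ ∫ x in a..γ, M * h x :=
    integral_mono_on haγ hfh_left hMh fun x hx =>
      mul_le_mul_of_nonneg_right (hf_bound x ⟨hx.1, hx.2.trans hγb⟩).2 (hh_nonneg x hx)
  have h_right : ∫ x in γ..b, f x * h x ≤ 0 := by
    simpa using integral_mono_on hγb hfh_right intervalIntegrable_const fun x hx =>
      mul_nonpos_of_nonneg_of_nonpos (hf_bound x ⟨haγ.trans hx.1, hx.2⟩).1 (hh_nonpos x hx)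
  rw [← integral_add_adjacent_intervals hfh_left hfh_right]
  linarith

variable {c : ℝ} {g : ℝ → ℝ}

theorem integral_mul_le_bathtub (haγ : a ≤ γ) (hγb : γ ≤ b)
    (hf : IntervalIntegrable f volume a b) (hg : ContinuousOn g (Set.Icc a b))
    (hf_bound : ∀ x ∈ Set.Icc a b, 0 ≤ f x ∧ f x ≤ M)
    (hf_mass : ∫ x in a..b, f x = M * (γ - a))
    (hg_ge : ∀ x ∈ Set.Icc a γ, c ≤ g x) (hg_le : ∀ x ∈ Set.Icc γ b, g x ≤ c) :
    ∫ x in a..b, f x * g x ≤ ∫ x in a..γ, M * g x := by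
  have hab : a ≤ b := haγ.trans hγb
  have hfg_sub : IntervalIntegrable (fun x => f x * (g x - c)) volume a b :=
    hf.mul_continuousOn (by rw [Set.uIcc_of_le hab]; exact hg.sub continuousOn_const)
  have hMg_sub : IntervalIntegrable (fun x => M * (g x - c)) volume a γ :=
    (((hg.mono (Set.Icc_subset_Icc_right hγb)).sub continuousOn_const).intervalIntegrable_of_Icc
      haγ).const_mul M
  have h_shifted := integral_mul_le_of_nonneg_of_nonpos (h := fun x => g x - c) haγ hγb hf
    (hg.sub continuousOn_const) hf_bound (fun x hx => sub_nonneg.2 (hg_ge x hx))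
    (fun x hx => sub_nonpos.2 (hg_le x hx))
  have h_lhs : ∫ x in a..b, f x * g x = (∫ x in a..b, f x * (g x - c)) + c * (M * (γ - a)) := by
    rw [← hf_mass, ← intervalIntegral.integral_const_mul,
      ← intervalIntegral.integral_add hfg_sub (hf.const_mul c)]
    congr 1 with x
    ring
  have h_rhs : ∫ x in a..γ, M * g x = (∫ x in a..γ, M * (g x - c)) + c * (M * (γ - a)) := by
    have h_const : ∫ _ in a..γ, c * M = c * (M * (γ - a)) := by
      rw [intervalIntegral.integral_const, smul_eq_mul]
      ring
    rw [← h_const, ← intervalIntegral.integral_add hMg_sub intervalIntegrable_const]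
    congr 1 with x
    ring
  rw [h_lhs, h_rhs]
  linarith

end Bathtub

theorem antitoneOn_cos_mul {T : ℝ} (hT : 0 < T) :
    AntitoneOn (fun ω => cos (ω * T)) (Set.Icc 0 (π / T)) := fun x hx y hy hxy =>
  antitoneOn_cos ⟨by nlinarith [hx.1], (le_div_iff₀ hT).1 hx.2⟩
    ⟨by nlinarith [hy.1], (le_div_iff₀ hT).1 hy.2⟩ (by nlinarith)

theorem square_tooth_optimal_high_finesse_general
    (T αM Γ : ℝ) (hT : 0 < T)
    (hΓ0 : 0 ≤ Γ) (hΓ : Γ ≤ π / (2 * T))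
    (f : ℝ → ℝ)
    (hint : IntervalIntegrable f volume 0 (π / T))
    (hbound : ∀ ω ∈ Set.Icc 0 (π / T), 0 ≤ f ω ∧ f ω ≤ αM)
    (harea : ∫ ω in (0:ℝ)..(π / T), f ω = αM * Γ) :
    (∫ ω in (0:ℝ)..(π / T), f ω * Real.cos (ω * T)) ≤
      ∫ ω in (0:ℝ)..Γ, αM * Real.cos (ω * T) := by
  have hΓπ : Γ ≤ π / T :=
    hΓ.trans (div_le_div_of_nonneg_left pi_pos.le hT (by linarith))
  have hΓ_mem : Γ ∈ Set.Icc 0 (π / T) := ⟨hΓ0, hΓπ⟩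
  have hcos := antitoneOn_cos_mul hT
  refine integral_mul_le_bathtub (c := cos (Γ * T)) hΓ0 hΓπ hint (by fun_prop) hbound
    (by rw [harea, sub_zero]) (fun ω hω => hcos ⟨hω.1, hω.2.trans hΓπ⟩ hΓ_mem hω.2)
    (fun ω hω => hcos hΓ_mem ⟨hΓ0.trans hω.1, hω.2⟩ hω.1)

theorem square_tooth_optimal_high_finesse
    (T αM Γ : ℝ) (hT : 0 < T) (hα : 0 < αM)
    (hΓ0 : 0 ≤ Γ) (hΓ : Γ ≤ π / (2 * T))
    (f : ℝ → ℝ)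
    (hint : IntervalIntegrable f volume 0 (π / T))
    (hbound : ∀ ω ∈ Set.Icc 0 (π / T), 0 ≤ f ω ∧ f ω ≤ αM)
    (harea : ∫ ω in (0:ℝ)..(π / T), f ω = αM * Γ) :
    (∫ ω in (0:ℝ)..(π / T), f ω * Real.cos (ω * T)) ≤
      ∫ ω in (0:ℝ)..Γ, αM * Real.cos (ω * T) :=
  square_tooth_optimal_high_finesse_general T αM Γ hT hΓ0 hΓ f hint hbound harea
end

section
/- For any integrable function f on [0, π/T] with 0 ≤ f(ω) ≤ α_M and ∫₀^{π/T} f(ω) dω = α_M·Γ where 0 ≤ Γ ≤ π/T, one has |∫₀^{π/T} f(ω)·cos(ωT) dω| ≤ ∫₀^Γ α_M·cos(ωT) dω = (α_M/T)·sin(ΓT). -/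
/-!
Bathtub principle: split at `Γ`. On `[Γ, π/T]` the weight `cos (ω T)` is at most `cos (Γ T)`,
on `[0, Γ]` it is at least `cos (Γ T)`, and the mass that `f` lacks below `αM` on `[0, Γ]`
equals the mass it carries on `[Γ, π/T]`. Hence moving all the mass onto `[0, Γ]` can only
increase the weighted integral; this works for any antitone weight. The lower bound is the
upper bound for `ω ↦ f (π/T - ω)`, as this reflection negates `cos (ω T)`.
-/

open Real MeasureTheory intervalIntegral

namespace intervalIntegral

variable {f g : ℝ → ℝ} {a b c M : ℝ}

theorem integral_mul_le_mul_integral_of_antitoneOn (hab : a ≤ b)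
    (hf : IntervalIntegrable f volume a b) (hg : ContinuousOn g (Set.Icc a b))
    (hg_anti : AntitoneOn g (Set.Icc a b)) (hf0 : ∀ x ∈ Set.Icc a b, 0 ≤ f x) :
    ∫ x in a..b, f x * g x ≤ g a * ∫ x in a..b, f x := by
  rw [← integral_const_mul]
  refine integral_mono_on hab (hf.mul_continuousOn (by rwa [Set.uIcc_of_le hab]))
    (hf.const_mul _) fun x hx => ?_
  rw [mul_comm (g a)]
  exact mul_le_mul_of_nonneg_left (hg_anti ⟨le_rfl, hab⟩ hx hx.1) (hf0 x hx)

theorem mul_integral_le_integral_mul_of_antitoneOn (hab : a ≤ b)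
    (hf : IntervalIntegrable f volume a b) (hg : ContinuousOn g (Set.Icc a b))
    (hg_anti : AntitoneOn g (Set.Icc a b)) (hf0 : ∀ x ∈ Set.Icc a b, 0 ≤ f x) :
    g b * ∫ x in a..b, f x ≤ ∫ x in a..b, f x * g x := by
  rw [← integral_const_mul]
  refine integral_mono_on hab (hf.const_mul _)
    (hf.mul_continuousOn (by rwa [Set.uIcc_of_le hab])) fun x hx => ?_
  rw [mul_comm (g b)]
  exact mul_le_mul_of_nonneg_left (hg_anti hx ⟨hab, le_rfl⟩ hx.2) (hf0 x hx)

theorem integral_mul_le_integral_const_mul_of_antitoneOn (hac : a ≤ c) (hcb : c ≤ b)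
    (hf : IntervalIntegrable f volume a b) (hg : ContinuousOn g (Set.Icc a b))
    (hg_anti : AntitoneOn g (Set.Icc a b)) (hf_mem : ∀ x ∈ Set.Icc a b, 0 ≤ f x ∧ f x ≤ M)
    (hf_int : ∫ x in a..b, f x = M * (c - a)) :
    ∫ x in a..b, f x * g x ≤ ∫ x in a..c, M * g x := by
  have hac_sub : Set.Icc a c ⊆ Set.Icc a b := Set.Icc_subset_Icc_right hcb
  have hcb_sub : Set.Icc c b ⊆ Set.Icc a b := Set.Icc_subset_Icc_left hac
  have hf_ac : IntervalIntegrable f volume a c :=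
    hf.mono_set (by rwa [Set.uIcc_of_le hac, Set.uIcc_of_le (hac.trans hcb)])
  have hf_cb : IntervalIntegrable f volume c b :=
    hf.mono_set (by rwa [Set.uIcc_of_le hcb, Set.uIcc_of_le (hac.trans hcb)])
  have hg_ac : ContinuousOn g (Set.uIcc a c) := by
    rw [Set.uIcc_of_le hac]; exact hg.mono hac_sub
  have hdef_ac : IntervalIntegrable (fun x => M - f x) volume a c :=
    intervalIntegrable_const.sub hf_ac
  have hdeficit : ∫ x in a..c, (M - f x) = ∫ x in c..b, f x := by
    have hmass := integral_add_adjacent_intervals hf_ac hf_cb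
    rw [integral_sub intervalIntegrable_const hf_ac, integral_const, smul_eq_mul]
    linarith
  have h_tail : ∫ x in c..b, f x * g x ≤ g c * ∫ x in c..b, f x :=
    integral_mul_le_mul_integral_of_antitoneOn hcb hf_cb (hg.mono hcb_sub)
      (hg_anti.mono hcb_sub) fun x hx => (hf_mem x (hcb_sub hx)).1
  have h_head : g c * ∫ x in a..c, (M - f x) ≤ ∫ x in a..c, (M - f x) * g x :=
    mul_integral_le_integral_mul_of_antitoneOn hac hdef_ac (hg.mono hac_sub)
      (hg_anti.mono hac_sub) fun x hx => sub_nonneg.2 (hf_mem x (hac_sub hx)).2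
  have h_split : ∫ x in a..c, (M - f x) * g x =
      (∫ x in a..c, M * g x) - ∫ x in a..c, f x * g x := by
    simp only [sub_mul]
    exact integral_sub ((intervalIntegrable_const (c := M)).mul_continuousOn hg_ac)
      (hf_ac.mul_continuousOn hg_ac)
  have h_adjacent :
      (∫ x in a..c, f x * g x) + ∫ x in c..b, f x * g x = ∫ x in a..b, f x * g x :=
    integral_add_adjacent_intervals (hf_ac.mul_continuousOn hg_ac)
      (hf_cb.mul_continuousOn (by rw [Set.uIcc_of_le hcb]; exact hg.mono hcb_sub))
  rw [hdeficit] at h_head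
  linarith

end intervalIntegral

theorem integral_const_mul_cos_mul {T : ℝ} (hT : T ≠ 0) (M a b : ℝ) :
    ∫ ω in a..b, M * cos (ω * T) = M / T * (sin (b * T) - sin (a * T)) := by
  rw [intervalIntegral.integral_const_mul, integral_comp_mul_right cos hT, integral_cos,
    smul_eq_mul]
  field_simp

theorem integral_mul_cos_mul_le {T M Γ : ℝ} {f : ℝ → ℝ} (hT : 0 < T) (hΓ0 : 0 ≤ Γ)
    (hΓ : Γ ≤ π / T) (hf : IntervalIntegrable f volume 0 (π / T))
    (hf_mem : ∀ ω ∈ Set.Icc 0 (π / T), 0 ≤ f ω ∧ f ω ≤ M)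
    (hf_int : ∫ ω in (0:ℝ)..(π / T), f ω = M * Γ) :
    ∫ ω in (0:ℝ)..(π / T), f ω * cos (ω * T) ≤ ∫ ω in (0:ℝ)..Γ, M * cos (ω * T) :=
  integral_mul_le_integral_const_mul_of_antitoneOn hΓ0 hΓ hf (by fun_prop)
    (antitoneOn_cos_mul hT) hf_mem (by rw [hf_int, sub_zero])

theorem integral_comp_sub_mul_cos_mul {T : ℝ} (hT : T ≠ 0) (f : ℝ → ℝ) :
    ∫ ω in (0:ℝ)..(π / T), f (π / T - ω) * cos (ω * T) =
      -∫ ω in (0:ℝ)..(π / T), f ω * cos (ω * T) := by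
  have hreflect :
      ∀ ω, f (π / T - ω) * cos (ω * T) = -(f (π / T - ω) * cos ((π / T - ω) * T)) := fun ω => by
    rw [sub_mul, div_mul_cancel₀ π hT, cos_pi_sub, mul_neg, neg_neg]
  simp only [hreflect, intervalIntegral.integral_neg,
    intervalIntegral.integral_comp_sub_left (fun ω => f ω * cos (ω * T)), sub_self, sub_zero]

theorem square_tooth_optimal_abs_general
    (T αM Γ : ℝ) (hT : 0 < T)
    (hΓ0 : 0 ≤ Γ) (hΓ : Γ ≤ π / T)
    (f : ℝ → ℝ)
    (hint : IntervalIntegrable f volume 0 (π / T))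
    (hbound : ∀ ω ∈ Set.Icc 0 (π / T), 0 ≤ f ω ∧ f ω ≤ αM)
    (harea : ∫ ω in (0:ℝ)..(π / T), f ω = αM * Γ) :
    |∫ ω in (0:ℝ)..(π / T), f ω * Real.cos (ω * T)| ≤
      ∫ ω in (0:ℝ)..Γ, αM * Real.cos (ω * T) ∧
    (∫ ω in (0:ℝ)..Γ, αM * Real.cos (ω * T)) = (αM / T) * Real.sin (Γ * T) := by
  have hupper := integral_mul_cos_mul_le hT hΓ0 hΓ hint hbound harea
  have hint' : IntervalIntegrable (fun ω => f (π / T - ω)) volume 0 (π / T) := by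
    simpa using (hint.comp_sub_left (π / T)).symm
  have hbound' : ∀ ω ∈ Set.Icc 0 (π / T), 0 ≤ f (π / T - ω) ∧ f (π / T - ω) ≤ αM :=
    fun ω hω => hbound _ ⟨sub_nonneg.2 hω.2, sub_le_self _ hω.1⟩
  have harea' : ∫ ω in (0:ℝ)..(π / T), f (π / T - ω) = αM * Γ := by
    rw [intervalIntegral.integral_comp_sub_left f, sub_self, sub_zero, harea]
  have hlower := integral_mul_cos_mul_le hT hΓ0 hΓ hint' hbound' harea'
  rw [integral_comp_sub_mul_cos_mul hT.ne'] at hlower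
  refine ⟨abs_le.2 ⟨by linarith, hupper⟩, ?_⟩
  rw [integral_const_mul_cos_mul hT.ne', zero_mul, sin_zero, sub_zero]

theorem square_tooth_optimal_abs
    (T αM Γ : ℝ) (hT : 0 < T) (hα : 0 < αM)
    (hΓ0 : 0 ≤ Γ) (hΓ : Γ ≤ π / T)
    (f : ℝ → ℝ)
    (hint : IntervalIntegrable f volume 0 (π / T))
    (hbound : ∀ ω ∈ Set.Icc 0 (π / T), 0 ≤ f ω ∧ f ω ≤ αM)
    (harea : ∫ ω in (0:ℝ)..(π / T), f ω = αM * Γ) :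
    |∫ ω in (0:ℝ)..(π / T), f ω * Real.cos (ω * T)| ≤
      ∫ ω in (0:ℝ)..Γ, αM * Real.cos (ω * T) ∧
    (∫ ω in (0:ℝ)..Γ, αM * Real.cos (ω * T)) = (αM / T) * Real.sin (Γ * T) :=
  square_tooth_optimal_abs_general T αM Γ hT hΓ0 hΓ f hint hbound harea
end

section
/- For any integrable function f on [-π/T, π/T] with 0 ≤ f(ω) ≤ α_M and total area ∫_{-π/T}^{π/T} f(ω) dω = S, one has |∫_{-π/T}^{π/T} f(ω)·cos(ωT) dω| ≤ ∫_{-S/(2α_M)}^{S/(2α_M)} α_M·cos(ωT) dω = (2α_M/T)·sin(ST/(2α_M)), provided S ≤ 2π·α_M/T and f satisfies the phase-centering condition ∫_{-π/T}^{π/T} f(ω)·sin(ωT) dω = 0. -/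
/-! Bathtub principle. With `c = cos (a T)`, pointwise
`f (cos (ω T) - c) ≤ α_M max (cos (ω T) - c) 0`, and the right-hand side lives on `|ω| ≤ a`,
exactly where `cos (ω T) ≥ c`; integrating and using `∫ f = 2 a α_M` gives the upper bound.
The lower bound is the upper bound for the complementary tooth `α_M - f`, of half-width
`π / T - a`: the cosine has mean zero over a period and `sin (π - a T) = sin (a T)`. -/

open Real MeasureTheory intervalIntegral Set

theorem cos_le_cos_of_abs_le {x y : ℝ} (hy : |y| ≤ π) (hxy : |x| ≤ |y|) : cos y ≤ cos x := by
  rw [← cos_abs x, ← cos_abs y]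
  exact cos_le_cos_of_nonneg_of_le_pi (abs_nonneg x) hy hxy

theorem integral_cos_mul {T : ℝ} (hT : T ≠ 0) (u v : ℝ) :
    ∫ ω in u..v, cos (ω * T) = (sin (v * T) - sin (u * T)) / T := by
  rw [integral_comp_mul_right cos hT, integral_cos, smul_eq_mul, inv_mul_eq_div]

theorem integral_max_zero_eq_integral {h : ℝ → ℝ} {l a b u : ℝ} (hla : l ≤ a) (hab : a ≤ b)
    (hbu : b ≤ u) (hh : ContinuousOn h (Icc l u)) (hpos : ∀ x ∈ Icc a b, 0 ≤ h x)
    (hneg : ∀ x ∈ Icc l u, x ∉ Ioo a b → h x ≤ 0) :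
    ∫ x in l..u, max (h x) 0 = ∫ x in a..b, h x := by
  have hint : ∀ v ∈ Icc l u, ∀ w ∈ Icc l u,
      IntervalIntegrable (fun x => max (h x) 0) volume v w := fun v hv w hw =>
    ((hh.sup continuousOn_const).mono (uIcc_subset_Icc hv hw)).intervalIntegrable
  have hl : l ∈ Icc l u := ⟨le_rfl, hla.trans (hab.trans hbu)⟩
  have ha : a ∈ Icc l u := ⟨hla, hab.trans hbu⟩
  have hb : b ∈ Icc l u := ⟨hla.trans hab, hbu⟩
  have hu : u ∈ Icc l u := ⟨hl.2, le_rfl⟩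
  have houter : ∀ x ∈ Icc l u, x ∉ Ioo a b → max (h x) 0 = 0 := fun x hx hx' =>
    max_eq_right (hneg x hx hx')
  have hleft : ∫ x in l..a, max (h x) 0 = 0 := by
    refine (integral_congr (g := fun _ => 0) fun x hx => ?_).trans integral_zero
    rw [uIcc_of_le hla] at hx
    exact houter x ⟨hx.1, hx.2.trans (hab.trans hbu)⟩ fun hx' => hx'.1.not_ge hx.2
  have hright : ∫ x in b..u, max (h x) 0 = 0 := by
    refine (integral_congr (g := fun _ => 0) fun x hx => ?_).trans integral_zero
    rw [uIcc_of_le hbu] at hx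
    exact houter x ⟨hla.trans (hab.trans hx.1), hx.2⟩ fun hx' => hx'.2.not_ge hx.1
  have hmiddle : ∫ x in a..b, max (h x) 0 = ∫ x in a..b, h x := by
    refine integral_congr fun x hx => ?_
    rw [uIcc_of_le hab] at hx
    exact max_eq_left (hpos x hx)
  rw [← integral_add_adjacent_intervals (hint l hl a ha) (hint a ha u hu),
    ← integral_add_adjacent_intervals (hint a ha b hb) (hint b hb u hu),
    hleft, hmiddle, hright, zero_add, add_zero]

theorem integral_mul_le_mul_integral_max_zero {f h : ℝ → ℝ} {M l u : ℝ} (hlu : l ≤ u)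
    (hf : IntervalIntegrable f volume l u) (hh : ContinuousOn h (Icc l u))
    (hfM : ∀ x ∈ Icc l u, 0 ≤ f x ∧ f x ≤ M) :
    ∫ x in l..u, f x * h x ≤ M * ∫ x in l..u, max (h x) 0 := by
  rw [← intervalIntegral.integral_const_mul]
  refine integral_mono_on hlu (hf.mul_continuousOn (by rwa [uIcc_of_le hlu]))
    (((hh.sup continuousOn_const).intervalIntegrable_of_Icc hlu).const_mul M) fun x hx => ?_
  obtain ⟨hf0, hfM⟩ := hfM x hx
  calc f x * h x ≤ f x * max (h x) 0 := mul_le_mul_of_nonneg_left (le_max_left _ _) hf0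
    _ ≤ M * max (h x) 0 := mul_le_mul_of_nonneg_right hfM (le_max_right _ _)

theorem integral_mul_cos_le {T M a : ℝ} {f : ℝ → ℝ} (hT : 0 < T) (ha0 : 0 ≤ a)
    (haL : a ≤ π / T) (hf : IntervalIntegrable f volume (-(π / T)) (π / T))
    (hfM : ∀ ω ∈ Icc (-(π / T)) (π / T), 0 ≤ f ω ∧ f ω ≤ M)
    (harea : ∫ ω in (-(π / T))..(π / T), f ω = 2 * a * M) :
    ∫ ω in (-(π / T))..(π / T), f ω * cos (ω * T) ≤ 2 * M * sin (a * T) / T := by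
  set L := π / T
  set c := cos (a * T)
  have habs : ∀ y, |y * T| = |y| * T := fun y => by rw [abs_mul, abs_of_pos hT]
  have hL : ∀ ω ∈ Icc (-L) L, |ω * T| ≤ π := fun ω hω => by
    rw [habs, ← le_div_iff₀ hT]
    exact abs_le.mpr hω
  have haπ : |a * T| ≤ π := hL a ⟨by linarith [ha0.trans haL], haL⟩
  have hcos : Continuous fun ω => cos (ω * T) := by fun_prop
  have hcont : ContinuousOn (fun ω => cos (ω * T) - c) (Icc (-L) L) := by fun_prop
  have hpeak : ∀ ω ∈ Icc (-a) a, 0 ≤ cos (ω * T) - c := fun ω hω =>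
    sub_nonneg.mpr <| cos_le_cos_of_abs_le haπ <| by
      rw [habs, habs, abs_of_nonneg ha0]
      exact mul_le_mul_of_nonneg_right (abs_le.mpr hω) hT.le
  have htails : ∀ ω ∈ Icc (-L) L, ω ∉ Ioo (-a) a → cos (ω * T) - c ≤ 0 := fun ω hω hω' =>
    sub_nonpos.mpr <| cos_le_cos_of_abs_le (hL ω hω) <| by
      rw [habs, habs, abs_of_nonneg ha0]
      refine mul_le_mul_of_nonneg_right ?_ hT.le
      by_contra! h
      exact hω' (abs_lt.mp h)
  have hbathtub :=
    integral_mul_le_mul_integral_max_zero (by linarith [ha0.trans haL]) hf hcont hfM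
  rw [integral_max_zero_eq_integral (by linarith) (by linarith) haL hcont hpeak htails,
    integral_sub (hcos.intervalIntegrable _ _) intervalIntegrable_const, integral_cos_mul hT.ne',
    intervalIntegral.integral_const, smul_eq_mul] at hbathtub
  have hsplit : ∫ ω in (-L)..L, f ω * (cos (ω * T) - c)
      = (∫ ω in (-L)..L, f ω * cos (ω * T)) - c * (2 * a * M) := by
    simp_rw [mul_sub]
    rw [integral_sub (hf.mul_continuousOn hcos.continuousOn) (hf.mul_const c),
      intervalIntegral.integral_mul_const, harea, mul_comm]
  rw [hsplit, neg_mul, sin_neg] at hbathtub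
  linarith [show M * ((sin (a * T) - -sin (a * T)) / T - (a - -a) * c)
    = 2 * M * sin (a * T) / T - c * (2 * a * M) by ring]

theorem neg_integral_mul_cos_le {T M a : ℝ} {f : ℝ → ℝ} (hT : 0 < T) (ha0 : 0 ≤ a)
    (haL : a ≤ π / T) (hf : IntervalIntegrable f volume (-(π / T)) (π / T))
    (hfM : ∀ ω ∈ Icc (-(π / T)) (π / T), 0 ≤ f ω ∧ f ω ≤ M)
    (harea : ∫ ω in (-(π / T))..(π / T), f ω = 2 * a * M) :
    -∫ ω in (-(π / T))..(π / T), f ω * cos (ω * T) ≤ 2 * M * sin (a * T) / T := by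
  set L := π / T
  have hLT : L * T = π := div_mul_cancel₀ π hT.ne'
  have hcos : Continuous fun ω => cos (ω * T) := by fun_prop
  have hperiod : ∫ ω in (-L)..L, cos (ω * T) = 0 := by
    rw [integral_cos_mul hT.ne', neg_mul, sin_neg, hLT, sin_pi, neg_zero, sub_zero, zero_div]
  have hcarea : ∫ ω in (-L)..L, (M - f ω) = 2 * (L - a) * M := by
    rw [integral_sub intervalIntegrable_const hf, intervalIntegral.integral_const, harea,
      smul_eq_mul]
    ring
  have hcomplement := integral_mul_cos_le hT (sub_nonneg.mpr haL) (sub_le_self L ha0)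
    (intervalIntegrable_const.sub hf)
    (fun ω hω => ⟨sub_nonneg.mpr (hfM ω hω).2, sub_le_self M (hfM ω hω).1⟩) hcarea
  simp_rw [sub_mul] at hcomplement
  rw [integral_sub (hcos.intervalIntegrable _ _ |>.const_mul M)
      (hf.mul_continuousOn hcos.continuousOn), intervalIntegral.integral_const_mul, hperiod,
    hLT, sin_pi_sub] at hcomplement
  linarith

theorem square_tooth_optimal_general_general
    (T αM S : ℝ) (hT : 0 < T) (hα : 0 < αM)
    (hS : S ≤ 2 * π * αM / T)
    (f : ℝ → ℝ)
    (hint : IntervalIntegrable f volume (-(π / T)) (π / T))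
    (hbound : ∀ ω ∈ Set.Icc (-(π / T)) (π / T), 0 ≤ f ω ∧ f ω ≤ αM)
    (harea : ∫ ω in (-(π / T))..(π / T), f ω = S) :
    |∫ ω in (-(π / T))..(π / T), f ω * Real.cos (ω * T)| ≤
      ∫ ω in (-(S / (2 * αM)))..(S / (2 * αM)), αM * Real.cos (ω * T) ∧
    (∫ ω in (-(S / (2 * αM)))..(S / (2 * αM)), αM * Real.cos (ω * T))
      = (2 * αM / T) * Real.sin (S * T / (2 * αM)) := by
  set a := S / (2 * αM) with ha
  have hS0 : 0 ≤ S := harea ▸ integral_nonneg (by linarith [pi_pos, div_pos pi_pos hT])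
    fun ω hω => (hbound ω hω).1
  have ha0 : 0 ≤ a := by positivity
  have haL : a ≤ π / T := by
    rw [div_le_div_iff₀ (by positivity) hT]
    rw [le_div_iff₀ hT] at hS
    linarith
  have harea' : ∫ ω in (-(π / T))..(π / T), f ω = 2 * a * αM := by
    rw [harea, ha]
    field_simp
  have htooth : ∫ ω in (-a)..a, αM * cos (ω * T) = 2 * αM * sin (a * T) / T := by
    rw [intervalIntegral.integral_const_mul, integral_cos_mul hT.ne', neg_mul, sin_neg]
    ring
  refine ⟨htooth ▸ abs_le.mpr ⟨?_, integral_mul_cos_le hT ha0 haL hint hbound harea'⟩, ?_⟩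
  · linarith [neg_integral_mul_cos_le hT ha0 haL hint hbound harea']
  · rw [htooth, show S * T / (2 * αM) = a * T by ring]
    ring

theorem square_tooth_optimal_general
    (T αM S : ℝ) (hT : 0 < T) (hα : 0 < αM)
    (hS : S ≤ 2 * π * αM / T)
    (f : ℝ → ℝ)
    (hint : IntervalIntegrable f volume (-(π / T)) (π / T))
    (hbound : ∀ ω ∈ Set.Icc (-(π / T)) (π / T), 0 ≤ f ω ∧ f ω ≤ αM)
    (harea : ∫ ω in (-(π / T))..(π / T), f ω = S)
    (hsin : ∫ ω in (-(π / T))..(π / T), f ω * Real.sin (ω * T) = 0) :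
    |∫ ω in (-(π / T))..(π / T), f ω * Real.cos (ω * T)| ≤
      ∫ ω in (-(S / (2 * αM)))..(S / (2 * αM)), αM * Real.cos (ω * T) ∧
    (∫ ω in (-(S / (2 * αM)))..(S / (2 * αM)), αM * Real.cos (ω * T))
      = (2 * αM / T) * Real.sin (S * T / (2 * αM)) :=
  square_tooth_optimal_general_general T αM S hT hα hS f hint hbound harea
end

section
/- The function η_S(p, OD) = (OD²·sin²(p)/π²)·exp(-p·OD/π), for fixed OD > 0 and p ∈ (0, π), attains its unique maximum at p = arctan(2π/OD), i.e., the optimal dimensionless square-tooth width satisfies tan(p_opt) = 2π/OD. -/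
/-!
With `k = OD / π` and `θ = arctan (2 / k)` the efficiency is `k ^ 2 * sin p ^ 2 * exp (-(k * p))`.
Since `sin θ = (2 / k) * cos θ`, the derivative of `sin p ^ 2 * exp (-(k * p))`, namely
`exp (-(k * p)) * sin p * (2 * cos p - k * sin p)`, equals
`(k / cos θ) * exp (-(k * p)) * sin p * sin (θ - p)`. On `(0, π)` its sign is that of
`sin (θ - p)`: positive for `p < θ` and negative for `p > θ`, so the function strictly
increases up to `θ` and strictly decreases after it.
-/

open Real Set

lemma Real.sin_arctan_sub (a p : ℝ) :
    sin (arctan a - p) = cos (arctan a) * (a * cos p - sin p) := by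
  have hsin : sin (arctan a) = a * cos (arctan a) := by
    rw [sin_arctan, cos_arctan, mul_one_div]
  rw [sin_sub, hsin]
  ring

lemma hasDerivAt_sin_sq_mul_exp_neg_mul (k p : ℝ) :
    HasDerivAt (fun x => sin x ^ 2 * exp (-(k * x)))
      (exp (-(k * p)) * sin p * (2 * cos p - k * sin p)) p := by
  have hsq : HasDerivAt (fun x => sin x ^ 2) (2 * sin p * cos p) p := by
    simpa using (hasDerivAt_sin p).fun_pow 2
  have hexp : HasDerivAt (fun x => exp (-(k * x))) (exp (-(k * p)) * -k) p := by
    simpa using ((hasDerivAt_id p).const_mul k).neg.exp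
  exact (hsq.fun_mul hexp).congr_deriv (by ring)

lemma two_mul_cos_sub_mul_sin_eq {k : ℝ} (hk : k ≠ 0) (p : ℝ) :
    2 * cos p - k * sin p = k / cos (arctan (2 / k)) * sin (arctan (2 / k) - p) := by
  rw [sin_arctan_sub]
  field_simp [(cos_arctan_pos (2 / k)).ne']

theorem sin_sq_mul_exp_neg_mul_lt_of_ne {k : ℝ} (hk : 0 < k) {p : ℝ} (hp : p ∈ Ioo 0 π)
    (hne : p ≠ arctan (2 / k)) :
    sin p ^ 2 * exp (-(k * p)) <
      sin (arctan (2 / k)) ^ 2 * exp (-(k * arctan (2 / k))) := by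
  set θ := arctan (2 / k)
  set f := fun x => sin x ^ 2 * exp (-(k * x))
  set f' := fun x => k / cos θ * exp (-(k * x)) * sin x * sin (θ - x)
  have hθ_pos : 0 < θ := arctan_pos.2 (by positivity)
  have hθ_lt : θ < π / 2 := arctan_lt_pi_div_two _
  have hderiv (x : ℝ) : HasDerivAt f (f' x) x := by
    convert hasDerivAt_sin_sq_mul_exp_neg_mul k x using 1
    rw [two_mul_cos_sub_mul_sin_eq hk.ne']
    ring
  have hcont : Continuous f := by fun_prop
  have hcoeff (x : ℝ) : 0 < k / cos θ * exp (-(k * x)) :=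
    mul_pos (div_pos hk (cos_arctan_pos _)) (exp_pos _)
  have hmono : StrictMonoOn f (Icc 0 θ) := by
    refine strictMonoOn_of_hasDerivWithinAt_pos (convex_Icc _ _) hcont.continuousOn
      (fun x _ => (hderiv x).hasDerivWithinAt) fun x hx => ?_
    rw [interior_Icc] at hx
    exact mul_pos (mul_pos (hcoeff x) (sin_pos_of_pos_of_lt_pi hx.1 (by linarith [hx.2])))
      (sin_pos_of_pos_of_lt_pi (by linarith [hx.2]) (by linarith [hx.1]))
  have hanti : StrictAntiOn f (Icc θ π) := by
    refine strictAntiOn_of_hasDerivWithinAt_neg (convex_Icc _ _) hcont.continuousOn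
      (fun x _ => (hderiv x).hasDerivWithinAt) fun x hx => ?_
    rw [interior_Icc] at hx
    exact mul_neg_of_pos_of_neg
      (mul_pos (hcoeff x) (sin_pos_of_pos_of_lt_pi (by linarith [hx.1]) hx.2))
      (sin_neg_of_neg_of_neg_pi_lt (by linarith [hx.1]) (by linarith [hx.2]))
  rcases hne.lt_or_gt with h | h
  · exact hmono ⟨hp.1.le, h.le⟩ ⟨hθ_pos.le, le_rfl⟩ h
  · exact hanti ⟨le_rfl, by linarith⟩ ⟨h.le, hp.2.le⟩ h

theorem square_tooth_efficiency_unique_max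
    (OD : ℝ) (hOD : 0 < OD) :
    ∀ p ∈ Set.Ioo (0:ℝ) π, p ≠ Real.arctan (2 * π / OD) →
      (OD ^ 2 * Real.sin p ^ 2 / π ^ 2) * Real.exp (-(p * OD / π)) <
        (OD ^ 2 * Real.sin (Real.arctan (2 * π / OD)) ^ 2 / π ^ 2) *
          Real.exp (-(Real.arctan (2 * π / OD) * OD / π)) := by
  intro p hp hne
  have hk : 0 < OD / π := div_pos hOD pi_pos
  have hratio : 2 * π / OD = 2 / (OD / π) := by field_simp
  have hrescale (x : ℝ) : OD ^ 2 * sin x ^ 2 / π ^ 2 * exp (-(x * OD / π)) =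
      (OD / π) ^ 2 * (sin x ^ 2 * exp (-(OD / π * x))) := by
    rw [show x * OD / π = OD / π * x by ring]
    ring
  rw [hratio] at hne ⊢
  rw [hrescale, hrescale]
  exact mul_lt_mul_of_pos_left (sin_sq_mul_exp_neg_mul_lt_of_ne hk hp hne) (by positivity)
end

section
/- The function η(x) = 4·exp(-(x/π)·arctan(2π/x))/(1 + 4π²/x²) is monotonically increasing for x > 0. -/
/-!
The logarithmic derivative of `η` is `2/x - arctan(2π/x)/π`: the rational terms coming from
differentiating `arctan(2π/x)` and the denominator add up exactly to `2/x`. It is positive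
because `arctan t < t` for `t > 0`.
-/

open Real

theorem arctan_lt_self {t : ℝ} (ht : 0 < t) : arctan t < t := by
  calc arctan t < tan (arctan t) := lt_tan (arctan_pos.mpr ht) (arctan_lt_pi_div_two t)
    _ = t := tan_arctan t

theorem arctan_two_pi_div_div_pi_lt {x : ℝ} (hx : 0 < x) : arctan (2 * π / x) / π < 2 / x := by
  rw [div_lt_iff₀ pi_pos]
  calc arctan (2 * π / x) < 2 * π / x := arctan_lt_self (by positivity)
    _ = 2 / x * π := by ring

theorem hasDerivAt_neg_div_pi_mul_arctan {x : ℝ} (hx : x ≠ 0) :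
    HasDerivAt (fun y : ℝ => -(y / π) * arctan (2 * π / y))
      (-(1 / π) * arctan (2 * π / x) + 2 * x / (x ^ 2 + 4 * π ^ 2)) x := by
  have hinv : HasDerivAt (fun y : ℝ => 2 * π / y) (-(2 * π) / x ^ 2) x := by
    simpa [div_eq_mul_inv, neg_div] using (hasDerivAt_inv hx).const_mul (2 * π)
  refine (((hasDerivAt_id x).div_const π).neg.mul hinv.arctan).congr_deriv ?_
  simp only [Pi.neg_apply, id]
  field_simp
  ring

theorem hasDerivAt_one_add_four_pi_sq_div_sq {x : ℝ} (hx : x ≠ 0) :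
    HasDerivAt (fun y : ℝ => 1 + 4 * π ^ 2 / y ^ 2) (-(8 * π ^ 2) / x ^ 3) x := by
  refine ((((hasDerivAt_pow 2 x).inv (pow_ne_zero 2 hx)).const_mul (4 * π ^ 2)).const_add
    1).congr_deriv ?_
  field_simp
  ring

theorem hasDerivAt_efficiency {x : ℝ} (hx : x ≠ 0) :
    HasDerivAt
      (fun x : ℝ => 4 * exp (-(x / π) * arctan (2 * π / x)) / (1 + 4 * π ^ 2 / x ^ 2))
      (4 * exp (-(x / π) * arctan (2 * π / x)) / (1 + 4 * π ^ 2 / x ^ 2)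
        * (2 / x - arctan (2 * π / x) / π)) x := by
  have hden : 1 + 4 * π ^ 2 / x ^ 2 ≠ 0 := by positivity
  refine (((hasDerivAt_neg_div_pi_mul_arctan hx).exp.const_mul 4).div
    (hasDerivAt_one_add_four_pi_sq_div_sq hx) hden).congr_deriv ?_
  field_simp
  ring

theorem optimized_efficiency_strictMono :
    StrictMonoOn
      (fun x : ℝ => 4 * Real.exp (-(x / π) * Real.arctan (2 * π / x)) / (1 + 4 * π ^ 2 / x ^ 2))
      (Set.Ioi 0) := by
  apply strictMonoOn_of_deriv_pos (convex_Ioi 0)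
  · exact fun x hx => (hasDerivAt_efficiency (ne_of_gt hx)).continuousAt.continuousWithinAt
  · intro x hx
    rw [interior_Ioi] at hx
    rw [(hasDerivAt_efficiency (ne_of_gt hx)).deriv]
    exact mul_pos (by positivity) (sub_pos.mpr (arctan_two_pi_div_div_pi_lt hx))
end

section
/- For all x > 0, 4·exp(-(x/π)·arctan(2π/x))/(1 + 4π²/x²) < 4/e². -/
/-!
Put `t = 2π / x`. Since `x / π = 2 / t` and `4π² / x² = t²`, the claim becomes
`exp (2 - 2 arctan t / t) < 1 + t²`, i.e. `2 (t - arctan t) < t log (1 + t²)`.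
The function `s log (1 + s²) - 2 s + 2 arctan s` vanishes at `0` and has derivative
`log (1 + s²)`, which is positive for `s ≠ 0`.
-/

open Real

lemma hasDerivAt_mul_log_one_add_sq_sub_two_mul_add_two_mul_arctan (s : ℝ) :
    HasDerivAt (fun s => s * log (1 + s ^ 2) - 2 * s + 2 * arctan s) (log (1 + s ^ 2)) s := by
  have h_one_add_sq : HasDerivAt (fun s : ℝ => 1 + s ^ 2) (2 * s) s := by
    simpa using (hasDerivAt_pow 2 s).const_add 1
  have h_log := (hasDerivAt_log (by positivity : (1 + s ^ 2) ≠ 0)).comp s h_one_add_sq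
  refine ((((hasDerivAt_id' s).mul h_log).sub ((hasDerivAt_id' s).const_mul 2)).add
    ((hasDerivAt_arctan s).const_mul 2)).congr_deriv ?_
  simp only [Function.comp_apply]
  field_simp
  ring

lemma two_mul_sub_arctan_lt_mul_log_one_add_sq {t : ℝ} (ht : 0 < t) :
    2 * (t - arctan t) < t * log (1 + t ^ 2) := by
  have hderiv := hasDerivAt_mul_log_one_add_sq_sub_two_mul_add_two_mul_arctan
  have hmono : StrictMonoOn (fun s => s * log (1 + s ^ 2) - 2 * s + 2 * arctan s) (Set.Ici 0) := by
    refine strictMonoOn_of_deriv_pos (convex_Ici 0)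
      (fun s _ => (hderiv s).continuousAt.continuousWithinAt) fun s hs => ?_
    rw [interior_Ici] at hs
    rw [(hderiv s).deriv]
    exact log_pos (by nlinarith [hs.out])
  have h_at_zero_lt := hmono Set.self_mem_Ici ht.le ht
  norm_num at h_at_zero_lt
  linarith

lemma four_mul_exp_neg_two_div_mul_arctan_div_lt {t : ℝ} (ht : 0 < t) :
    4 * exp (-(2 / t) * arctan t) / (1 + t ^ 2) < 4 / exp 2 := by
  have hlog : -(2 / t) * arctan t + 2 < log (1 + t ^ 2) := by
    rw [show -(2 / t) * arctan t + 2 = 2 * (t - arctan t) / t by field_simp; ring,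
      div_lt_iff₀ ht]
    linarith [two_mul_sub_arctan_lt_mul_log_one_add_sq ht]
  have hexp : exp (-(2 / t) * arctan t) * exp 2 < 1 + t ^ 2 := by
    rw [← exp_add, ← exp_log (by positivity : (0 : ℝ) < 1 + t ^ 2)]
    exact exp_lt_exp.mpr hlog
  rw [div_lt_div_iff₀ (by positivity) (exp_pos 2)]
  linarith

theorem optimized_efficiency_lt_sup (x : ℝ) (hx : 0 < x) :
    4 * Real.exp (-(x / π) * Real.arctan (2 * π / x)) / (1 + 4 * π ^ 2 / x ^ 2)
      < 4 / Real.exp 2 := by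
  have hxπ : x / π = 2 / (2 * π / x) := by field_simp
  have hsq : 4 * π ^ 2 / x ^ 2 = (2 * π / x) ^ 2 := by ring
  rw [hxπ, hsq]
  exact four_mul_exp_neg_two_div_mul_arctan_div_lt (by positivity)
end

section
/- Let g: [a,b] → ℝ be monotonically decreasing, f_s(x) = α·𝟙_{[a,c]}(x) for c ∈ [a,b], and f: [a,b] → ℝ integrable with 0 ≤ f ≤ α and ∫_a^b f = ∫_a^b f_s = α(c-a). Then ∫_a^b (f(x) - f_s(x))·g(x) dx ≤ 0. -/
/-!
Write `f̃ = f - fₛ`. Since `0 ≤ f ≤ α`, `f̃ ≤ 0` on `[a, c]`, where `g ≥ g c`, and `f̃ ≥ 0` on `(c, b]`,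
where `g ≤ g c`; hence `f̃ * g ≤ f̃ * g c` pointwise, and integrating gives
`∫ f̃ * g ≤ g c * ∫ f̃ = 0`, the last step by the area condition.
-/

open MeasureTheory intervalIntegral Set

theorem IntervalIntegrable.indicator {f : ℝ → ℝ} {a b : ℝ} {μ : Measure ℝ}
    (hf : IntervalIntegrable f μ a b) {s : Set ℝ} (hs : MeasurableSet s) :
    IntervalIntegrable (s.indicator f) μ a b :=
  intervalIntegrable_iff.2 ((intervalIntegrable_iff.1 hf).indicator hs)

theorem intervalIntegral.integral_indicator_Icc_const {a b c : ℝ} (hc : c ∈ Icc a b) (α : ℝ) :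
    ∫ x in a..b, (Icc a c).indicator (fun _ => α) x = α * (c - a) := by
  have hinter : Ioc a b ∩ Icc a c = Ioc a c := by
    ext x
    simp only [mem_inter_iff, mem_Ioc, mem_Icc]
    grind [hc.2]
  rw [integral_of_le (hc.1.trans hc.2), setIntegral_indicator measurableSet_Icc, hinter,
    ← integral_of_le hc.1, integral_const, smul_eq_mul, mul_comm]

theorem mul_le_mul_apply_of_antitoneOn_of_sign_change {g h : ℝ → ℝ} {a b c x : ℝ}
    (hg : AntitoneOn g (Icc a b)) (hc : c ∈ Icc a b)
    (hneg : ∀ x ∈ Icc a b, x ≤ c → h x ≤ 0) (hpos : ∀ x ∈ Icc a b, c < x → 0 ≤ h x)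
    (hx : x ∈ Icc a b) :
    h x * g x ≤ h x * g c := by
  rcases le_or_gt x c with hxc | hcx
  · exact mul_le_mul_of_nonpos_left (hg hx hc hxc) (hneg x hx hxc)
  · exact mul_le_mul_of_nonneg_left (hg hc hx hcx.le) (hpos x hx hcx)

theorem intervalIntegral.integral_mul_le_of_antitoneOn_of_sign_change {g h : ℝ → ℝ} {a b c : ℝ}
    (hab : a ≤ b) (hg : AntitoneOn g (Icc a b)) (hc : c ∈ Icc a b)
    (hh : IntervalIntegrable h volume a b)
    (hhg : IntervalIntegrable (fun x => h x * g x) volume a b)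
    (hneg : ∀ x ∈ Icc a b, x ≤ c → h x ≤ 0) (hpos : ∀ x ∈ Icc a b, c < x → 0 ≤ h x) :
    ∫ x in a..b, h x * g x ≤ (∫ x in a..b, h x) * g c := by
  rw [← integral_mul_const]
  exact integral_mono_on hab hhg (hh.mul_const _) fun x hx =>
    mul_le_mul_apply_of_antitoneOn_of_sign_change hg hc hneg hpos hx

theorem core_rearrangement_inequality_general
    (a b α c : ℝ) (hab : a < b) (hc : c ∈ Set.Icc a b)
    (g : ℝ → ℝ) (hg : AntitoneOn g (Set.Icc a b))
    (f : ℝ → ℝ)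
    (hfint : IntervalIntegrable f volume a b)
    (hfgint : IntervalIntegrable (fun x => f x * g x) volume a b)
    (hbound : ∀ x ∈ Set.Icc a b, 0 ≤ f x ∧ f x ≤ α)
    (harea : ∫ x in a..b, f x = α * (c - a)) :
    (∫ x in a..b, (f x - Set.indicator (Set.Icc a c) (fun _ => α) x) * g x) ≤ 0 := by
  set fₛ := (Icc a c).indicator fun _ => α
  have hgint : IntervalIntegrable g volume a b :=
    (hg.mono (uIcc_of_le hab.le).subset).intervalIntegrable
  have hfₛ : IntervalIntegrable fₛ volume a b := intervalIntegrable_const.indicator measurableSet_Icc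
  have hfₛg : IntervalIntegrable (fun x => fₛ x * g x) volume a b := by
    convert (hgint.const_mul α).indicator measurableSet_Icc using 1
    exact funext fun x => (indicator_mul_left _ _ g).symm
  calc ∫ x in a..b, (f x - fₛ x) * g x
      ≤ (∫ x in a..b, (f x - fₛ x)) * g c := by
        refine integral_mul_le_of_antitoneOn_of_sign_change hab.le hg hc (hfint.sub hfₛ)
          (by simpa only [sub_mul] using hfgint.sub hfₛg) (fun x hx hxc => ?_) fun x hx hcx => ?_
        · simpa [fₛ, indicator_of_mem (show x ∈ Icc a c from ⟨hx.1, hxc⟩)] using (hbound x hx).2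
        · simpa [fₛ, indicator_of_notMem (show x ∉ Icc a c from fun h => hcx.not_ge h.2)]
            using (hbound x hx).1
    _ = 0 := by rw [integral_sub hfint hfₛ, harea, integral_indicator_Icc_const hc]; ring

theorem core_rearrangement_inequality
    (a b α c : ℝ) (hab : a < b) (hα : 0 < α) (hc : c ∈ Set.Icc a b)
    (g : ℝ → ℝ) (hg : AntitoneOn g (Set.Icc a b))
    (f : ℝ → ℝ)
    (hfint : IntervalIntegrable f volume a b)
    (hfgint : IntervalIntegrable (fun x => f x * g x) volume a b)
    (hbound : ∀ x ∈ Set.Icc a b, 0 ≤ f x ∧ f x ≤ α)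
    (harea : ∫ x in a..b, f x = α * (c - a)) :
    (∫ x in a..b, (f x - Set.indicator (Set.Icc a c) (fun _ => α) x) * g x) ≤ 0 :=
  core_rearrangement_inequality_general a b α c hab hc g hg f hfint hfgint hbound harea
end

section
/- For the square tooth of half-width Γ ∈ [0, π/T] and height α_M centered at 0 inside one period [-π/T, π/T], the Fourier coefficients are F₀ = α_M·Γ·T/π and F_{-1} = (α_M/π)·sin(ΓT), and the resulting forward retrieval efficiency is η(L) = (α_M·L·sin(ΓT)/π)²·exp(-α_M·L·Γ·T/π). -/
/-!
Since `Γ ≤ π/T` the tooth lies inside the period window, so both coefficients are integrals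
over `[-Γ, Γ]`: of the constant `α_M`, giving `2Γα_M`, and of `α_M e^{iωT}`, whose odd (sine)
part cancels, giving `2α_M sin(ΓT)/T`. Since `F_{-1}` is real, `|F_{-1}L|²` is its square.
-/

open Real MeasureTheory intervalIntegral Complex

theorem intervalIntegral_indicator_Icc {E : Type*} [NormedAddCommGroup E] [NormedSpace ℝ E]
    {a b c d : ℝ} (hac : a ≤ c) (hcd : c ≤ d) (hdb : d ≤ b) (g : ℝ → E) :
    ∫ x in a..b, (Set.Icc c d).indicator g x = ∫ x in c..d, g x := by
  have hIoc : (Set.Ioc a b ∩ Set.Icc c d : Set ℝ) =ᵐ[volume] Set.Ioc c d := by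
    rw [← Set.inter_eq_right.mpr (Set.Ioc_subset_Ioc hac hdb)]
    exact (Filter.EventuallyEq.refl _ _).inter Ioc_ae_eq_Icc.symm
  rw [integral_of_le (hac.trans (hcd.trans hdb)), integral_of_le hcd,
    setIntegral_indicator measurableSet_Icc, setIntegral_congr_set hIoc]

theorem intervalIntegral_indicator_Icc_const {a b c d : ℝ} (hac : a ≤ c) (hcd : c ≤ d)
    (hdb : d ≤ b) (α : ℝ) :
    ∫ x in a..b, (Set.Icc c d).indicator (fun _ => α) x = (d - c) * α := by
  rw [intervalIntegral_indicator_Icc hac hcd hdb, intervalIntegral.integral_const, smul_eq_mul]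

theorem intervalIntegral_ofReal_indicator_Icc_const_mul {a b c d : ℝ} (hac : a ≤ c)
    (hcd : c ≤ d) (hdb : d ≤ b) (α : ℝ) (h : ℝ → ℂ) :
    ∫ x in a..b, (((Set.Icc c d).indicator (fun _ => α) x : ℝ) : ℂ) * h x
      = α * ∫ x in c..d, h x := by
  have hmul : ∀ x, (((Set.Icc c d).indicator (fun _ => α) x : ℝ) : ℂ) * h x
      = (Set.Icc c d).indicator (fun x => α * h x) x := fun x => by
    by_cases hx : x ∈ Set.Icc c d <;> simp [hx]
  simp_rw [hmul]
  rw [intervalIntegral_indicator_Icc hac hcd hdb, intervalIntegral.integral_const_mul]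

theorem integral_exp_I_mul_mul_symm (r T : ℝ) (hT : T ≠ 0) :
    ∫ x in -r..r, Complex.exp (I * x * T) = 2 * Real.sin (r * T) / T := by
  have hIT : I * T ≠ 0 := mul_ne_zero I_ne_zero (ofReal_ne_zero.mpr hT)
  simp_rw [mul_right_comm I]
  rw [integral_exp_mul_complex hIT]
  push_cast
  rw [← mul_div_mul_left _ _ I_ne_zero, two_sin,
    show I * T * r = r * T * I by ring, show I * T * -r = -(r * T) * I by ring,
    ← mul_assoc I I, I_mul_I]
  ring

theorem square_tooth_fourier_and_efficiency_general
    (T αM Γ L : ℝ) (hT : 0 < T)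
    (hΓ0 : 0 ≤ Γ) (hΓ : Γ ≤ π / T)
    (f : ℝ → ℝ) (hf : f = Set.indicator (Set.Icc (-Γ) Γ) (fun _ => αM)) :
    ((T / (2 * π)) * ∫ ω in (-(π / T))..(π / T), f ω) = αM * Γ * T / π ∧
    ((T / (2 * π) : ℂ) * ∫ ω in (-(π / T))..(π / T),
        (f ω : ℂ) * Complex.exp (Complex.I * ω * T)) = ((αM / π) * Real.sin (Γ * T) : ℝ) ∧
    ‖((T / (2 * π) : ℂ) * ∫ ω in (-(π / T))..(π / T),
        (f ω : ℂ) * Complex.exp (Complex.I * ω * T)) * (L : ℂ)‖ ^ 2 *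
      Real.exp (-((T / (2 * π)) * ∫ ω in (-(π / T))..(π / T), f ω) * L)
      = (αM * L * Real.sin (Γ * T) / π) ^ 2 * Real.exp (-(αM * L * Γ * T / π)) := by
  subst hf
  have hwindow : -(π / T) ≤ -Γ := neg_le_neg hΓ
  have hΓΓ : -Γ ≤ Γ := by linarith
  have hF0 : (T / (2 * π)) * ∫ ω in (-(π / T))..(π / T), (Set.Icc (-Γ) Γ).indicator
      (fun _ => αM) ω = αM * Γ * T / π := by
    rw [intervalIntegral_indicator_Icc_const hwindow hΓΓ hΓ]
    field_simp
    ring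
  have hFneg1 : ((T / (2 * π) : ℂ) * ∫ ω in (-(π / T))..(π / T),
      (((Set.Icc (-Γ) Γ).indicator (fun _ => αM) ω : ℝ) : ℂ) * Complex.exp (I * ω * T))
      = ((αM / π) * Real.sin (Γ * T) : ℝ) := by
    rw [intervalIntegral_ofReal_indicator_Icc_const_mul hwindow hΓΓ hΓ,
      integral_exp_I_mul_mul_symm Γ T hT.ne']
    have hTc : (T : ℂ) ≠ 0 := ofReal_ne_zero.mpr hT.ne'
    push_cast
    field_simp
  refine ⟨hF0, hFneg1, ?_⟩
  rw [hF0, hFneg1, ← ofReal_mul, norm_real, norm_eq_abs, sq_abs]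
  ring_nf

theorem square_tooth_fourier_and_efficiency
    (T αM Γ L : ℝ) (hT : 0 < T) (hα : 0 < αM) (hL : 0 < L)
    (hΓ0 : 0 ≤ Γ) (hΓ : Γ ≤ π / T)
    (f : ℝ → ℝ) (hf : f = Set.indicator (Set.Icc (-Γ) Γ) (fun _ => αM)) :
    ((T / (2 * π)) * ∫ ω in (-(π / T))..(π / T), f ω) = αM * Γ * T / π ∧
    ((T / (2 * π) : ℂ) * ∫ ω in (-(π / T))..(π / T),
        (f ω : ℂ) * Complex.exp (Complex.I * ω * T)) = ((αM / π) * Real.sin (Γ * T) : ℝ) ∧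
    ‖((T / (2 * π) : ℂ) * ∫ ω in (-(π / T))..(π / T),
        (f ω : ℂ) * Complex.exp (Complex.I * ω * T)) * (L : ℂ)‖ ^ 2 *
      Real.exp (-((T / (2 * π)) * ∫ ω in (-(π / T))..(π / T), f ω) * L)
      = (αM * L * Real.sin (Γ * T) / π) ^ 2 * Real.exp (-(αM * L * Γ * T / π)) :=
  square_tooth_fourier_and_efficiency_general T αM Γ L hT hΓ0 hΓ f hf
end
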